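/- Let K be a compact connected Lie group with closed connected subgroups G and H such that 𝔤 + 𝔥 = 𝔨 (Lie algebras). Then Ad(k)𝔤 + 𝔥 = 𝔨 for all k ∈ K. -/

import Mathlib

/-- The Lie algebra of a (matrix) subgroup `G`, as the set of matrices `X` whose whole
one-parameter group `t ↦ exp (t • X)` lies in `G`. -/
def lieAlgOf (n : ℕ) (G : Subgroup (Matrix (Fin n) (Fin n) ℝ)ˣ) :
    Set (Matrix (Fin n) (Fin n) ℝ) :=
  {X | ∀ t : ℝ, ∃ u ∈ G, (u : Matrix (Fin n) (Fin n) ℝ) = NormedSpace.exp (t • X)}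

/-! Writing `k⁻¹ = g h` with `g ∈ G`, `h ∈ H` gives `Ad(k) 𝔤 + 𝔥 = Ad(h⁻¹) (𝔤 + 𝔥) ⊇ Ad(h⁻¹) 𝔨 = 𝔨`,
so everything rests on `K = G H`. As `G H` is compact and `K` connected, it suffices that `G H`
contains a neighbourhood of `1` in `K`. Let `S` be a complement of `𝔤 + 𝔥`. By the inverse
function theorem for `(s, t, c) ↦ ∏ exp (sᵢ Yᵢ) · ∏ exp (tⱼ Zⱼ) · exp c`, every matrix near `1` is
`g h exp c` with `c ∈ S` small, and if it lies in `K` then so does `exp c`. Then `c = 0`: otherwise, along a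
sequence of such `c → 0`, a limit `L` of `c / ‖c‖` is a unit vector of `S` with
`exp (t L) = lim exp (⌊t / ‖c‖⌋ c) ∈ K`, so `L ∈ 𝔨 ⊆ 𝔤 + 𝔥`, which is impossible. -/

open Filter Topology NormedSpace Pointwise

theorem mul_mem_mul_of_mem_mul {M : Type*} [Group M] {G H : Subgroup M} {g h x : M}
    (hg : g ∈ G) (hh : h ∈ H) (hx : x ∈ (G : Set M) * H) : g * x * h ∈ (G : Set M) * H := by
  obtain ⟨g', hg', h', hh', rfl⟩ := hx
  exact ⟨g * g', mul_mem hg hg', h' * h, mul_mem hh' hh, by simp only [mul_assoc]⟩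

theorem coe_subset_mul_of_isPreconnected {M : Type*} [TopologicalSpace M] [Group M]
    [IsTopologicalGroup M] {K G H : Subgroup M} (hK : IsPreconnected (K : Set M))
    (hGK : G ≤ K) (hHK : H ≤ K) (hclosed : IsClosed ((G : Set M) * (H : Set M)))
    (hloc : ∀ᶠ k in 𝓝 1, k ∈ K → k ∈ (G : Set M) * (H : Set M)) :
    (K : Set M) ⊆ (G : Set M) * (H : Set M) := by
  have := Subtype.preconnectedSpace hK
  set T : Set (K : Set M) := Subtype.val ⁻¹' ((G : Set M) * H)
  have hopen : IsOpen T := by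
    refine isOpen_iff_mem_nhds.2 fun x hx => ?_
    obtain ⟨g, hg, h, hh, hgh⟩ := Set.mem_mul.1 hx
    have hφ : Tendsto (fun y => g⁻¹ * y * h⁻¹) (𝓝 (x : M)) (𝓝 1) := by
      simpa [← hgh] using ((continuous_const_mul g⁻¹).mul_const h⁻¹).tendsto (g * h)
    change ∀ᶠ y : (K : Set M) in 𝓝 x, (y : M) ∈ (G : Set M) * H
    rw [eventually_nhds_subtype_iff, eventually_nhdsWithin_iff]
    filter_upwards [hφ.eventually hloc] with y hy hyK
    have := mul_mem_mul_of_mem_mul hg hh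
      (hy (mul_mem (mul_mem (inv_mem (hGK hg)) hyK) (inv_mem (hHK hh))))
    simpa [mul_assoc] using this
  have hT : T = Set.univ := IsClopen.eq_univ ⟨hclosed.preimage continuous_subtype_val, hopen⟩
    ⟨⟨1, one_mem K⟩, 1, one_mem G, 1, one_mem H, mul_one 1⟩
  exact fun k hk => (Set.ext_iff.1 hT ⟨k, hk⟩).2 trivial

theorem tendsto_floor_div_mul_self {α : Type*} {l : Filter α} {ε : α → ℝ}
    (hε : Tendsto ε l (𝓝[>] 0)) (t : ℝ) :
    Tendsto (fun a => (⌊t / ε a⌋ : ℝ) * ε a) l (𝓝 t) := by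
  have hpos : ∀ᶠ a in l, 0 < ε a := hε.eventually self_mem_nhdsWithin
  refine tendsto_of_tendsto_of_tendsto_of_le_of_le' (g := fun a => t - ε a)
    (by simpa using tendsto_const_nhds.sub (tendsto_nhds_of_tendsto_nhdsWithin hε))
    tendsto_const_nhds ?_ ?_
  · filter_upwards [hpos] with a ha
    have := Int.lt_floor_add_one (t / ε a)
    rw [div_lt_iff₀ ha] at this
    linarith
  · filter_upwards [hpos] with a ha
    exact (le_div_iff₀ ha).1 (Int.floor_le _)

theorem exists_fin_range_subset_span_eq (K : Type*) {V : Type*} [DivisionRing K]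
    [AddCommGroup V] [Module K V] [FiniteDimensional K V] (s : Set V) :
    ∃ (m : ℕ) (b : Fin m → V),
      Set.range b ⊆ s ∧ Submodule.span K (Set.range b) = Submodule.span K s := by
  obtain ⟨t, hts, hspan, hind⟩ := exists_linearIndependent K s
  obtain ⟨m, b, -, rfl⟩ := hind.setFinite.fin_param
  exact ⟨m, b, hts, hspan⟩

theorem hasStrictFDerivAt_exp_comp_zero {𝕂 E 𝔸 : Type*} [RCLike 𝕂] [NormedAddCommGroup E]
    [NormedSpace 𝕂 E] [NormedRing 𝔸] [NormedAlgebra 𝕂 𝔸] [CompleteSpace 𝔸] (L : E →L[𝕂] 𝔸) :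
    HasStrictFDerivAt (fun x => exp (L x)) L 0 := by
  have hexp : HasStrictFDerivAt (exp : 𝔸 → 𝔸) (1 : 𝔸 →L[𝕂] 𝔸) (L 0) := by
    rw [map_zero]; exact hasStrictFDerivAt_exp_zero
  exact (hexp.comp 0 L.hasStrictFDerivAt).congr_fderiv (ContinuousLinearMap.id_comp L)

theorem HasStrictFDerivAt.mul_coprod_of_eq_one {𝕜 E F A : Type*} [NontriviallyNormedField 𝕜]
    [NormedAddCommGroup E] [NormedSpace 𝕜 E] [NormedAddCommGroup F] [NormedSpace 𝕜 F]
    [NormedRing A] [NormedAlgebra 𝕜 A] {f : E → A} {g : F → A} {f' : E →L[𝕜] A} {g' : F →L[𝕜] A}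
    {x : E} {y : F} (hf : HasStrictFDerivAt f f' x) (hg : HasStrictFDerivAt g g' y)
    (hfx : f x = 1) (hgy : g y = 1) :
    HasStrictFDerivAt (fun p : E × F => f p.1 * g p.2) (f'.coprod g') (x, y) := by
  refine ((hf.comp (x, y) hasStrictFDerivAt_fst).mul'
    (hg.comp (x, y) hasStrictFDerivAt_snd)).congr_fderiv ?_
  ext p <;> simp [hfx, hgy]

abbrev Mat (n : ℕ) := Matrix (Fin n) (Fin n) ℝ

section MatrixGroups

variable {n : ℕ}

theorem conj_mem_lieAlgOf {Q : Subgroup (Mat n)ˣ} {u : (Mat n)ˣ} (hu : u ∈ Q) {X : Mat n}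
    (hX : X ∈ lieAlgOf n Q) : (u : Mat n) * X * ((u⁻¹ : (Mat n)ˣ) : Mat n) ∈ lieAlgOf n Q := by
  intro t
  obtain ⟨w, hw, hwX⟩ := hX t
  refine ⟨u * w * u⁻¹, mul_mem (mul_mem hu hw) (inv_mem hu), ?_⟩
  rw [← smul_mul_assoc, ← mul_smul_comm, Matrix.exp_units_conj, ← hwX]
  rfl

theorem exp_zsmul_mem {Q : Subgroup (Mat n)ˣ} {X : Mat n}
    (hX : exp X ∈ Units.val '' (Q : Set (Mat n)ˣ)) (m : ℤ) :
    exp ((m : ℝ) • X) ∈ Units.val '' (Q : Set (Mat n)ˣ) := by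
  obtain ⟨u, hu, huX⟩ := hX
  refine ⟨u ^ m, zpow_mem hu m, ?_⟩
  rw [Matrix.coe_units_zpow, huX, ← Matrix.exp_zsmul, Int.cast_smul_eq_zsmul]

section Normed

-- Any submultiplicative norm will do; it induces the product topology used in the statement.
attribute [local instance] Matrix.linftyOpNormedRing Matrix.linftyOpNormedAlgebra

theorem mem_lieAlgOf_of_tendsto {K : Subgroup (Mat n)ˣ}
    (hK : IsClosed (Units.val '' (K : Set (Mat n)ˣ))) {C : ℕ → Mat n}
    (hC : Tendsto C atTop (𝓝 0)) (hC0 : ∀ k, C k ≠ 0)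
    (hCK : ∀ k, exp (C k) ∈ Units.val '' (K : Set (Mat n)ˣ)) {L : Mat n}
    (hL : Tendsto (fun k => ‖C k‖⁻¹ • C k) atTop (𝓝 L)) : L ∈ lieAlgOf n K := by
  intro t
  have hnorm : Tendsto (fun k => ‖C k‖) atTop (𝓝[>] 0) :=
    tendsto_nhdsWithin_iff.2 ⟨by simpa using hC.norm, .of_forall fun k => norm_pos_iff.2 (hC0 k)⟩
  have hlim : Tendsto (fun k => ((⌊t / ‖C k‖⌋ : ℝ) * ‖C k‖) • (‖C k‖⁻¹ • C k)) atTop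
      (𝓝 (t • L)) := (tendsto_floor_div_mul_self hnorm t).smul hL
  have hsmul : ∀ k, ((⌊t / ‖C k‖⌋ : ℝ) * ‖C k‖) • (‖C k‖⁻¹ • C k)
      = ((⌊t / ‖C k‖⌋ : ℤ) : ℝ) • C k := fun k => by
    rw [smul_smul, mul_assoc, mul_inv_cancel₀ (norm_ne_zero_iff.2 (hC0 k)), mul_one]
  simp only [hsmul] at hlim
  exact hK.mem_of_tendsto ((NormedSpace.exp_continuous.tendsto _).comp hlim)
    (.of_forall fun k => exp_zsmul_mem (hCK k) _)

theorem eventually_eq_zero_of_exp_mem {K : Subgroup (Mat n)ˣ}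
    (hK : IsClosed (Units.val '' (K : Set (Mat n)ˣ))) {S : Submodule ℝ (Mat n)}
    (hS : Disjoint S (Submodule.span ℝ (lieAlgOf n K))) :
    ∀ᶠ C in 𝓝 (0 : Mat n), C ∈ S → exp C ∈ Units.val '' (K : Set (Mat n)ˣ) → C = 0 := by
  by_contra h
  simp only [not_eventually, Classical.not_imp] at h
  have : FirstCountableTopology (Mat n) :=
    inferInstanceAs (FirstCountableTopology (Fin n → Fin n → ℝ))
  obtain ⟨C, hC, hCprop⟩ := exists_seq_forall_of_frequently h
  choose hCS hCK hC0 using hCprop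
  have hsphere : ∀ k, ‖C k‖⁻¹ • C k ∈ Metric.sphere (0 : Mat n) 1 ∩ S := fun k =>
    ⟨by simp [norm_smul, hC0 k], S.smul_mem _ (hCS k)⟩
  obtain ⟨L, ⟨hL1, hLS⟩, φ, hφ, hL⟩ :=
    ((isCompact_sphere 0 1).inter_right S.closed_of_finiteDimensional).tendsto_subseq hsphere
  have hLK : L ∈ lieAlgOf n K :=
    mem_lieAlgOf_of_tendsto hK (hC.comp hφ.tendsto_atTop) (fun k => hC0 (φ k))
      (fun k => hCK (φ k)) hL
  have hL0 : L = 0 := (Submodule.disjoint_def.1 hS) L hLS (Submodule.subset_span hLK)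
  simp [hL0] at hL1

noncomputable def expProd {m : ℕ} (b : Fin m → Mat n) (t : Fin m → ℝ) : Mat n :=
  (List.ofFn fun i => exp (t i • b i)).prod

theorem expProd_zero {m : ℕ} (b : Fin m → Mat n) : expProd b 0 = 1 := by
  simp [expProd]

theorem expProd_mem {Q : Subgroup (Mat n)ˣ} {m : ℕ} {b : Fin m → Mat n}
    (hb : ∀ i, b i ∈ lieAlgOf n Q) (t : Fin m → ℝ) :
    expProd b t ∈ Units.val '' (Q : Set (Mat n)ˣ) :=
  Submonoid.list_prod_mem (s := Q.toSubmonoid.map (Units.coeHom (Mat n)))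
    (List.forall_mem_ofFn_iff.2 fun i => hb i (t i))

theorem hasStrictFDerivAt_expProd {m : ℕ} (b : Fin m → Mat n) :
    HasStrictFDerivAt (expProd b) (Fintype.linearCombination ℝ b).toContinuousLinearMap 0 := by
  have := HasStrictFDerivAt.list_prod' (l := List.finRange m) (x := (0 : Fin m → ℝ))
    (f := fun i t => exp (t i • b i))
    (f' := fun i => (ContinuousLinearMap.proj (R := ℝ) (φ := fun _ : Fin m => ℝ) i).smulRight (b i))
    fun i _ => hasStrictFDerivAt_exp_comp_zero
      ((ContinuousLinearMap.proj (R := ℝ) (φ := fun _ : Fin m => ℝ) i).smulRight (b i))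
  have hfun : expProd b = fun t => ((List.finRange m).map fun i => exp (t i • b i)).prod := by
    funext t; simp [expProd, List.ofFn_eq_map]
  rw [hfun]
  refine this.congr_fderiv ?_
  ext t : 1
  change _ = ∑ i, t i • b i
  simpa using Fintype.sum_equiv (finCongr List.length_finRange)
    (fun i => t (List.finRange m)[i] • b (List.finRange m)[i]) (fun i => t i • b i) (by simp)

theorem exists_hasStrictFDerivAt_zero_range_eq_span_lieAlgOf (Q : Subgroup (Mat n)ˣ) :
    ∃ (m : ℕ) (f : (Fin m → ℝ) → Mat n) (f' : (Fin m → ℝ) →L[ℝ] Mat n),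
      f 0 = 1 ∧ (∀ t, f t ∈ Units.val '' (Q : Set (Mat n)ˣ)) ∧ HasStrictFDerivAt f f' 0 ∧
      (f' : (Fin m → ℝ) →ₗ[ℝ] Mat n).range = Submodule.span ℝ (lieAlgOf n Q) := by
  obtain ⟨m, b, hbQ, hspan⟩ := exists_fin_range_subset_span_eq ℝ (lieAlgOf n Q)
  exact ⟨m, expProd b, _, expProd_zero b, expProd_mem (fun i => hbQ ⟨i, rfl⟩),
    hasStrictFDerivAt_expProd b, by rw [← hspan]; exact Fintype.range_linearCombination ℝ b⟩

theorem eventually_exists_mul_mul_exp {G H : Subgroup (Mat n)ˣ} {S : Submodule ℝ (Mat n)}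
    (hS : Submodule.span ℝ (lieAlgOf n G) ⊔ Submodule.span ℝ (lieAlgOf n H) ⊔ S = ⊤)
    {V : Set (Mat n)} (hV : V ∈ 𝓝 0) :
    ∀ᶠ M in 𝓝 (1 : Mat n), ∃ g ∈ G, ∃ h ∈ H, ∃ c ∈ S, c ∈ V ∧ M = g * h * exp c := by
  obtain ⟨mG, fG, fG', hfG0, hfG, hfG', hrangeG⟩ :=
    exists_hasStrictFDerivAt_zero_range_eq_span_lieAlgOf G
  obtain ⟨mH, fH, fH', hfH0, hfH, hfH', hrangeH⟩ :=
    exists_hasStrictFDerivAt_zero_range_eq_span_lieAlgOf H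
  have hexp : HasStrictFDerivAt (fun c : S => exp (c : Mat n)) S.subtypeL 0 :=
    hasStrictFDerivAt_exp_comp_zero S.subtypeL
  have hΨ := hfG'.mul_coprod_of_eq_one (hfH'.mul_coprod_of_eq_one hexp hfH0 (by simp))
    hfG0 (by simp [hfH0])
  have hmap := hΨ.map_nhds_eq_of_surj <| by
    refine LinearMap.range_eq_top.2 fun M => ?_
    obtain ⟨_, hyz, c, hc, rfl⟩ := Submodule.mem_sup.1 (hS ▸ Submodule.mem_top : M ∈ _)
    obtain ⟨y, hy, z, hz, rfl⟩ := Submodule.mem_sup.1 hyz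
    rw [← hrangeG] at hy
    rw [← hrangeH] at hz
    obtain ⟨s, rfl⟩ := hy
    obtain ⟨t, rfl⟩ := hz
    exact ⟨(s, t, ⟨c, hc⟩), (add_assoc _ _ _).symm⟩
  have hV' : {p : (Fin mG → ℝ) × (Fin mH → ℝ) × S | (p.2.2 : Mat n) ∈ V} ∈ 𝓝 (0, 0, 0) :=
    (continuous_subtype_val.comp (continuous_snd.comp continuous_snd)).continuousAt
      |>.preimage_mem_nhds (by simpa using hV)
  have himage := hmap.symm.le (image_mem_map hV')
  simp only [hfG0, hfH0, ZeroMemClass.coe_zero, exp_zero, mul_one] at himage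
  filter_upwards [himage] with M ⟨⟨s, t, c⟩, hcV, hM⟩
  obtain ⟨g, hg, hgs⟩ := hfG s
  obtain ⟨h, hh, hht⟩ := hfH t
  exact ⟨g, hg, h, hh, c, c.2, hcV, by rw [← hM, hgs, hht, mul_assoc]⟩

theorem eventually_mem_mul_of_mem {K G H : Subgroup (Mat n)ˣ}
    (hK : IsClosed (Units.val '' (K : Set (Mat n)ˣ))) (hGK : G ≤ K) (hHK : H ≤ K)
    (hsum : ∀ X ∈ lieAlgOf n K, ∃ Y ∈ lieAlgOf n G, ∃ Z ∈ lieAlgOf n H, X = Y + Z) :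
    ∀ᶠ k in 𝓝 (1 : (Mat n)ˣ), k ∈ K → k ∈ (G : Set (Mat n)ˣ) * (H : Set (Mat n)ˣ) := by
  set W := Submodule.span ℝ (lieAlgOf n G) ⊔ Submodule.span ℝ (lieAlgOf n H)
  obtain ⟨S, hWS⟩ := Submodule.exists_isCompl W
  have hKW : Submodule.span ℝ (lieAlgOf n K) ≤ W := Submodule.span_le.2 fun X hX => by
    obtain ⟨Y, hY, Z, hZ, rfl⟩ := hsum X hX
    exact Submodule.add_mem_sup (Submodule.subset_span hY) (Submodule.subset_span hZ)
  have hsmall := eventually_eq_zero_of_exp_mem hK (hWS.symm.disjoint.mono_right hKW)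
  have hnear := eventually_exists_mul_mul_exp hWS.sup_eq_top hsmall
  filter_upwards [(Units.continuous_val.tendsto' 1 1 Units.val_one).eventually hnear]
    with k ⟨g, hg, h, hh, c, hcS, hc, hk⟩ hkK
  have hcK : exp c ∈ Units.val '' (K : Set (Mat n)ˣ) :=
    ⟨(g * h)⁻¹ * k, mul_mem (inv_mem (mul_mem (hGK hg) (hHK hh))) hkK, by simp [hk, mul_assoc]⟩
  rw [hc hcS hcK, exp_zero, mul_one] at hk
  exact ⟨g, hg, h, hh, Units.ext hk.symm⟩

end Normed

end MatrixGroups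

theorem stmt_18_general (n : ℕ) (K G H : Subgroup (Matrix (Fin n) (Fin n) ℝ)ˣ)
    (hKcompact : IsCompact (K : Set (Matrix (Fin n) (Fin n) ℝ)ˣ))
    (hKconn : IsConnected (K : Set (Matrix (Fin n) (Fin n) ℝ)ˣ))
    (hGK : G ≤ K) (hHK : H ≤ K)
    (hGclosed : IsClosed (G : Set (Matrix (Fin n) (Fin n) ℝ)ˣ))
    (hHclosed : IsClosed (H : Set (Matrix (Fin n) (Fin n) ℝ)ˣ))
    (hsum : ∀ X ∈ lieAlgOf n K, ∃ Y ∈ lieAlgOf n G, ∃ Z ∈ lieAlgOf n H, X = Y + Z) :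
    ∀ k : (Matrix (Fin n) (Fin n) ℝ)ˣ, k ∈ K →
      ∀ X ∈ lieAlgOf n K, ∃ Y ∈ lieAlgOf n G, ∃ Z ∈ lieAlgOf n H,
        X = (k : Matrix (Fin n) (Fin n) ℝ) * Y * ((k⁻¹ : (Matrix (Fin n) (Fin n) ℝ)ˣ) :
          Matrix (Fin n) (Fin n) ℝ) + Z := by
  intro k hk X hX
  have hGH : IsClosed ((G : Set (Mat n)ˣ) * (H : Set (Mat n)ˣ)) :=
    ((hKcompact.of_isClosed_subset hGclosed hGK).mul
      (hKcompact.of_isClosed_subset hHclosed hHK)).isClosed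
  have hKGH := coe_subset_mul_of_isPreconnected hKconn.isPreconnected hGK hHK hGH
    (eventually_mem_mul_of_mem (hKcompact.image Units.continuous_val).isClosed hGK hHK hsum)
  obtain ⟨g, hg, h, hh, hgh⟩ := hKGH (inv_mem hk)
  obtain ⟨Y, hY, Z, hZ, hYZ⟩ := hsum _ (conj_mem_lieAlgOf (hHK hh) hX)
  refine ⟨_, conj_mem_lieAlgOf hg hY, _, conj_mem_lieAlgOf (inv_mem hh) hZ, ?_⟩
  have hX' : X = ((h⁻¹ : (Mat n)ˣ) : Mat n) * (Y + Z) * h := by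
    rw [← hYZ]; simp [mul_assoc]
  rw [hX', ← inv_inv k, ← hgh]
  simp [mul_add, add_mul, mul_assoc]

/-- Let `K` be a compact connected (matrix) Lie group with closed connected subgroups
`G` and `H` such that `𝔤 + 𝔥 = 𝔨` on Lie algebras.  Then `Ad(k) 𝔤 + 𝔥 = 𝔨` for all
`k ∈ K`. -/
theorem stmt_18 (n : ℕ) (K G H : Subgroup (Matrix (Fin n) (Fin n) ℝ)ˣ)
    (hKcompact : IsCompact (K : Set (Matrix (Fin n) (Fin n) ℝ)ˣ))
    (hKconn : IsConnected (K : Set (Matrix (Fin n) (Fin n) ℝ)ˣ))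
    (hGK : G ≤ K) (hHK : H ≤ K)
    (hGclosed : IsClosed (G : Set (Matrix (Fin n) (Fin n) ℝ)ˣ))
    (hGconn : IsConnected (G : Set (Matrix (Fin n) (Fin n) ℝ)ˣ))
    (hHclosed : IsClosed (H : Set (Matrix (Fin n) (Fin n) ℝ)ˣ))
    (hHconn : IsConnected (H : Set (Matrix (Fin n) (Fin n) ℝ)ˣ))
    (hsum : ∀ X ∈ lieAlgOf n K, ∃ Y ∈ lieAlgOf n G, ∃ Z ∈ lieAlgOf n H, X = Y + Z) :
    ∀ k : (Matrix (Fin n) (Fin n) ℝ)ˣ, k ∈ K →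
      ∀ X ∈ lieAlgOf n K, ∃ Y ∈ lieAlgOf n G, ∃ Z ∈ lieAlgOf n H,
        X = (k : Matrix (Fin n) (Fin n) ℝ) * Y * ((k⁻¹ : (Matrix (Fin n) (Fin n) ℝ)ˣ) :
          Matrix (Fin n) (Fin n) ℝ) + Z :=
  stmt_18_general n K G H hKcompact hKconn hGK hHK hGclosed hHclosed hsum
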